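/- arXiv:1812.02600 — 2 statements merged into one kernel-verified Lean document; each statement's English description precedes it below -/
import Mathlib

section
/- Over the alphabet A = {a, b}, the language WMIX(ab, ba, a, b) = { w ∈ {a,b}* : |w|_{ab} = |w|_{ba} = |w|_a = |w|_b } is finite. -/
/-!
Letters are factors of length one and `ab`, `ba` are factors of length two, so in a nonempty
word `w` we have `|w|_a + |w|_b = |w|` while `|w|_ab + |w|_ba ≤ |w| - 1` (two different factors
of length two cannot start at the same position). A common value `k` would give `2k = |w|` and
`2k < |w|` at once; hence the language is `{ε}`.
-/

/-- `occ w u` is the number of occurrences of `u` as a contiguous factor of `w`. -/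
noncomputable def occ {A : Type*} (w u : List A) : ℕ :=
  Nat.card {p : List A × List A // p.1 ++ u ++ p.2 = w}

/-- letter `a` of the two-letter alphabet, modelled by `Bool`. -/
def la : Bool := true
/-- letter `b` of the two-letter alphabet, modelled by `Bool`. -/
def lb : Bool := false

section

variable {A : Type*}

theorem finite_factorizations (w u : List A) :
    Finite {p : List A × List A // p.1 ++ u ++ p.2 = w} := by
  refine Set.Finite.to_subtype ((w.inits.finite_toSet.prod w.tails.finite_toSet).subset ?_)
  rintro ⟨s, t⟩ (h : s ++ u ++ t = w)
  simp only [Set.mem_prod, List.mem_inits, List.mem_tails]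
  exact ⟨⟨u ++ t, by simp [← h]⟩, ⟨s ++ u, h⟩⟩

theorem subsingleton_append_eq (u v : List A) : Subsingleton {s : List A // u ++ s = v} :=
  ⟨fun ⟨_, hs⟩ ⟨_, ht⟩ => Subtype.ext (List.append_cancel_left (hs.trans ht.symm))⟩

theorem card_append_eq [DecidableEq A] (u v : List A) :
    Nat.card {s : List A // u ++ s = v} = if u <+: v then 1 else 0 := by
  have := subsingleton_append_eq u v
  split_ifs with h
  · have : Nonempty {s : List A // u ++ s = v} := let ⟨s, hs⟩ := h; ⟨⟨s, hs⟩⟩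
    exact Nat.card_unique
  · have : IsEmpty {s : List A // u ++ s = v} := ⟨fun ⟨s, hs⟩ => h ⟨s, hs⟩⟩
    exact Nat.card_of_isEmpty

def factorizationsConsEquiv (x : A) (w u : List A) :
    {p : List A × List A // p.1 ++ u ++ p.2 = x :: w} ≃
      {p : List A × List A // p.1 ++ u ++ p.2 = w} ⊕ {s : List A // u ++ s = x :: w} where
  toFun
    | ⟨([], t), h⟩ => .inr ⟨t, by simpa using h⟩
    | ⟨(_ :: s, t), h⟩ => .inl ⟨(s, t), by simpa using (List.cons_eq_cons.mp (by simpa using h)).2⟩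
  invFun
    | .inl ⟨(s, t), h⟩ => ⟨(x :: s, t), by simp [h]⟩
    | .inr ⟨t, h⟩ => ⟨([], t), by simpa using h⟩
  left_inv := by
    rintro ⟨⟨_ | ⟨y, s⟩, t⟩, h⟩
    · rfl
    · obtain rfl : y = x := (List.cons_eq_cons.mp (by simpa using h)).1
      rfl
  right_inv := by
    rintro (⟨⟨s, t⟩, h⟩ | ⟨t, h⟩) <;> rfl

theorem occ_cons [DecidableEq A] (x : A) (w u : List A) :
    occ (x :: w) u = occ w u + if u <+: x :: w then 1 else 0 := by
  have := finite_factorizations w u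
  have := subsingleton_append_eq u (x :: w)
  rw [occ, Nat.card_congr (factorizationsConsEquiv x w u), Nat.card_sum, card_append_eq, occ]

theorem occ_eq_zero_of_length_lt {w u : List A} (h : w.length < u.length) : occ w u = 0 := by
  have : IsEmpty {p : List A × List A // p.1 ++ u ++ p.2 = w} := by
    refine ⟨fun ⟨p, hp⟩ => ?_⟩
    have := congrArg List.length hp
    simp only [List.length_append] at this
    omega
  exact Nat.card_of_isEmpty

theorem occ_singleton [DecidableEq A] (w : List A) (x : A) : occ w [x] = w.count x := by
  induction w with
  | nil => exact occ_eq_zero_of_length_lt (by simp)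
  | cons y w ih =>
    simp [occ_cons, ih, List.count_cons, eq_comm (a := x)]

theorem occ_pair_add_occ_pair_lt_length [DecidableEq A] {x y : A} (hxy : x ≠ y) {w : List A}
    (hw : w ≠ []) : occ w [x, y] + occ w [y, x] < w.length := by
  induction w with
  | nil => exact absurd rfl hw
  | cons z w ih =>
    rcases eq_or_ne w [] with rfl | hw'
    · simp [occ_eq_zero_of_length_lt]
    · have head_pairs : (if [x, y] <+: z :: w then 1 else 0) +
          (if [y, x] <+: z :: w then 1 else 0) ≤ 1 := by
        split_ifs with hxy' hyx'
        · exact absurd ((List.cons_prefix_cons.1 hxy').1.trans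
            (List.cons_prefix_cons.1 hyx').1.symm) hxy
        all_goals omega
      rw [occ_cons, occ_cons, List.length_cons]
      have := ih hw'
      omega

end

theorem wmix_ab_ba_a_b_finite :
    {w : List Bool | occ w [la, lb] = occ w [lb, la] ∧ occ w [lb, la] = occ w [la] ∧
      occ w [la] = occ w [lb]}.Finite := by
  refine (Set.finite_singleton []).subset fun w ⟨hab, hba, hab'⟩ => ?_
  by_contra hw
  have hpairs := occ_pair_add_occ_pair_lt_length (show la ≠ lb by decide) hw
  have hletters : occ w [la] + occ w [lb] = w.length := by
    rw [occ_singleton, occ_singleton]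
    exact List.count_true_add_count_false w
  omega
end

section
/- For nonempty words w₁, w₂ over an alphabet A, the language WMIX(w₁, w₂) = { w ∈ A* : |w|_{w₁} = |w|_{w₂} } is finite if and only if A consists of a single letter and w₁ ≠ w₂. -/
namespace WmixAux

variable {A : Type*}

lemma occ_eq_card_pos (w u : List A) (hu : u ≠ []) :
    occ w u = Nat.card {i : ℕ // (w.drop i).take u.length = u} := by
  apply Nat.card_congr
  refine ⟨fun p => ⟨p.1.1.length, by
      obtain ⟨⟨p1, p2⟩, rfl⟩ := p
      dsimp only
      rw [List.append_assoc, List.drop_left, List.take_left]⟩,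
    fun i => ⟨(w.take i.1, w.drop (i.1 + u.length)), ?_⟩, ?_, ?_⟩
  · obtain ⟨i, hi⟩ := i
    dsimp only
    have key : u ++ w.drop (i + u.length) = w.drop i := by
      conv_rhs => rw [← List.take_append_drop u.length (w.drop i)]
      rw [hi, List.drop_drop, Nat.add_comm]
    rw [List.append_assoc, key, List.take_append_drop]
  · rintro ⟨⟨p1, p2⟩, hp⟩
    apply Subtype.ext
    dsimp only at hp ⊢
    simp only [Prod.mk.injEq]
    refine ⟨?_, ?_⟩
    · rw [← hp, List.append_assoc, List.take_left]
    · rw [← hp, ← List.length_append, List.drop_left]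
  · rintro ⟨i, hi⟩
    apply Subtype.ext
    simp only [List.length_take]
    have h1 := congrArg List.length hi
    have h2 : 0 < u.length := List.length_pos_iff.mpr hu
    simp only [List.length_take, List.length_drop] at h1
    omega

lemma card_interval (lo len : ℕ) :
    Nat.card {i : ℕ // lo ≤ i ∧ i < lo + len} = len := by
  have e : {i : ℕ // lo ≤ i ∧ i < lo + len} ≃ Fin len :=
    ⟨fun x => ⟨x.1 - lo, by have := x.2; omega⟩, fun m => ⟨lo + m.1, by have := m.2; omega⟩,
     fun x => Subtype.ext (by have := x.2; simp; omega),
     fun m => Fin.ext (by simp)⟩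
  rw [Nat.card_congr e]
  simp

lemma take_drop_iff (a b : A) (p q j : ℕ) (hj : 1 ≤ j) (hab : p = 0 ∨ a ≠ b) (i : ℕ) :
    ((List.replicate p b ++ List.replicate q a).drop i).take j = List.replicate j a ↔
      (p ≤ i ∧ i < p + (q + 1 - j)) := by
  constructor
  · intro h
    have hlen := congrArg List.length h
    simp only [List.length_take, List.length_drop, List.length_append,
      List.length_replicate] at hlen
    have hpi : p ≤ i := by
      rcases hab with rfl | hab
      · omega
      by_contra hip
      push_neg at hip
      have hd : (List.replicate p b ++ List.replicate q a).drop i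
          = List.replicate (p - i) b ++ List.replicate q a := by
        rw [List.drop_append]
        simp [Nat.sub_eq_zero_of_le hip.le]
      rw [hd, List.take_append, List.take_replicate] at h
      have hbmem : b ∈ List.replicate j a := by
        rw [← h]
        apply List.mem_append_left
        rw [List.mem_replicate]
        exact ⟨by omega, rfl⟩
      exact hab (List.eq_of_mem_replicate hbmem).symm
    exact ⟨hpi, by omega⟩
  · rintro ⟨h1, h2⟩
    have hd : (List.replicate p b ++ List.replicate q a).drop i
        = List.replicate (p + q - i) a := by
      rw [List.drop_append]
      simp only [List.length_replicate, Nat.sub_eq_zero_of_le h1, List.drop_replicate,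
        List.replicate_zero, List.nil_append]
      congr 1
      omega
    rw [hd, List.take_replicate, Nat.min_eq_left (by omega)]

lemma occ_rep_append (a b : A) (p q j : ℕ) (hj : 1 ≤ j) (hab : p = 0 ∨ a ≠ b) :
    occ (List.replicate p b ++ List.replicate q a) (List.replicate j a) = q + 1 - j := by
  rw [occ_eq_card_pos _ _ (by simp; omega)]
  simp only [List.length_replicate]
  rw [Nat.card_congr (Equiv.subtypeEquivRight (take_drop_iff a b p q j hj hab)),
    card_interval]

lemma occ_reverse (w u : List A) : occ w.reverse u.reverse = occ w u := by
  apply Nat.card_congr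
  refine ⟨fun p => ⟨(p.1.2.reverse, p.1.1.reverse), ?_⟩,
    fun p => ⟨(p.1.2.reverse, p.1.1.reverse), ?_⟩, ?_, ?_⟩
  · have := congrArg List.reverse p.2
    simpa [List.reverse_append, List.append_assoc] using this
  · have := congrArg List.reverse p.2
    simpa [List.reverse_append, List.append_assoc] using this
  · rintro ⟨⟨p1, p2⟩, hp⟩
    apply Subtype.ext
    simp
  · rintro ⟨⟨p1, p2⟩, hp⟩
    apply Subtype.ext
    simp

lemma occ_rep_append' (a b : A) (hab : a ≠ b) (p q k : ℕ) (hk : 1 ≤ k) :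
    occ (List.replicate p b ++ List.replicate q a) (List.replicate k b) = p + 1 - k := by
  have h := occ_reverse (List.replicate p b ++ List.replicate q a) (List.replicate k b)
  rw [List.reverse_append, List.reverse_replicate, List.reverse_replicate,
    List.reverse_replicate] at h
  rw [← h]
  exact occ_rep_append b a q p k hk (Or.inr hab.symm)

lemma occ_rep_rep (c : A) (n j : ℕ) (hj : 1 ≤ j) :
    occ (List.replicate n c) (List.replicate j c) = n + 1 - j := by
  simpa using occ_rep_append c c 0 n j hj (Or.inl rfl)

lemma occ_rep_zero (n : ℕ) (c : A) (u : List A) (hu : ∃ x ∈ u, x ≠ c) :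
    occ (List.replicate n c) u = 0 := by
  have : IsEmpty {p : List A × List A // p.1 ++ u ++ p.2 = List.replicate n c} := by
    constructor
    rintro ⟨⟨p1, p2⟩, hp⟩
    obtain ⟨x, hxu, hxc⟩ := hu
    have hx : x ∈ List.replicate n c := by
      rw [← hp]; simp [hxu]
    exact hxc (List.eq_of_mem_replicate hx)
  rw [occ]
  exact Nat.card_of_isEmpty

end WmixAux

open WmixAux
theorem wmix_two_words_finite_iff {A : Type*} (w₁ w₂ : List A)
    (h₁ : w₁ ≠ []) (h₂ : w₂ ≠ []) :
    {w : List A | occ w w₁ = occ w w₂}.Finite ↔ (Nat.card A = 1 ∧ w₁ ≠ w₂) := by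
  constructor
  · intro hfin
    by_contra hnot
    obtain ⟨a, ha⟩ := List.exists_mem_of_ne_nil w₁ h₁
    by_cases heq : w₁ = w₂
    · subst heq
      have hinf : {w : List A | occ w w₁ = occ w w₁}.Infinite :=
        Set.infinite_of_injective_forall_mem
          (f := fun n : ℕ => List.replicate n a)
          (fun m n h => by simpa using congrArg List.length h)
          (fun n => by simp only [Set.mem_setOf_eq])
      exact hinf hfin
    have hA : Nat.card A ≠ 1 := fun h => hnot ⟨h, heq⟩
    have hb : ∃ b : A, b ≠ a := by
      by_contra h
      push_neg at h
      exact hA (Nat.card_eq_one_iff_exists.mpr ⟨a, h⟩)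
    obtain ⟨b, hba⟩ := hb
    by_cases hc : ∃ c : A, (∃ x ∈ w₁, x ≠ c) ∧ (∃ x ∈ w₂, x ≠ c)
    · obtain ⟨c, hc1, hc2⟩ := hc
      have hinf : {w : List A | occ w w₁ = occ w w₂}.Infinite :=
        Set.infinite_of_injective_forall_mem
          (f := fun n : ℕ => List.replicate n c)
          (fun m n h => by simpa using congrArg List.length h)
          (fun n => by
            simp only [Set.mem_setOf_eq]
            rw [occ_rep_zero _ _ _ hc1, occ_rep_zero _ _ _ hc2])
      exact hinf hfin
    push_neg at hc
    have hab : a ≠ b := fun h => hba h.symm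
    have h2b : ∀ x ∈ w₂, x = b := hc b ⟨a, ha, hab⟩
    have h1a : ∀ x ∈ w₁, x = a := by
      intro x hx
      by_contra hxa
      obtain ⟨y, hy⟩ := List.exists_mem_of_ne_nil w₂ h₂
      have hya := hc a ⟨x, hx, hxa⟩ y hy
      exact hab (hya.symm.trans (h2b y hy))
    have hw1 : w₁ = List.replicate w₁.length a :=
      List.eq_replicate_iff.mpr ⟨rfl, h1a⟩
    have hw2 : w₂ = List.replicate w₂.length b :=
      List.eq_replicate_iff.mpr ⟨rfl, h2b⟩
    have hj : 1 ≤ w₁.length := List.length_pos_iff.mpr h₁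
    have hk : 1 ≤ w₂.length := List.length_pos_iff.mpr h₂
    have hinf : {w : List A | occ w w₁ = occ w w₂}.Infinite :=
      Set.infinite_of_injective_forall_mem
        (f := fun n : ℕ => List.replicate (n + w₂.length) b ++ List.replicate (n + w₁.length) a)
        (fun m n h => by
          have := congrArg List.length h
          simp only [List.length_append, List.length_replicate] at this
          omega)
        (fun n => by
          simp only [Set.mem_setOf_eq]
          rw [hw1, hw2, occ_rep_append a b _ _ _ hj (Or.inr hab),
            occ_rep_append' a b hab _ _ _ hk]
          simp only [List.length_replicate]
          omega)
    exact hinf hfin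
  · rintro ⟨hcard, hne⟩
    obtain ⟨c, hcc⟩ := Nat.card_eq_one_iff_exists.mp hcard
    have hfinA : Finite A := Nat.finite_of_card_ne_zero (by omega)
    have hrep : ∀ l : List A, l = List.replicate l.length c :=
      fun l => List.eq_replicate_iff.mpr ⟨rfl, fun x _ => hcc x⟩
    have hj : 1 ≤ w₁.length := List.length_pos_iff.mpr h₁
    have hk : 1 ≤ w₂.length := List.length_pos_iff.mpr h₂
    have hjk : w₁.length ≠ w₂.length := by
      intro h
      exact hne (by rw [hrep w₁, hrep w₂, h])
    apply (List.finite_length_lt A (max w₁.length w₂.length)).subset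
    intro w hw
    simp only [Set.mem_setOf_eq] at hw ⊢
    by_contra hlen
    push_neg at hlen
    rw [hrep w, hrep w₁, hrep w₂, occ_rep_rep c _ _ hj, occ_rep_rep c _ _ hk] at hw
    omega
end
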